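/- Let r ≥ 1, 0 ≤ j ≤ 2^{r-1} - 1, and let A = M^{2^r - j} + 1 in F_2[x]. Then the length ℓ_A equals j + 1. -/

import Mathlib

open Polynomial Finset

/-- The polynomial `M = x^2 + x + 1` over `F_2`. -/
noncomputable def M : Polynomial (ZMod 2) := X ^ 2 + X + 1

/-- The odd part of a binary polynomial: `P` divided by `x^{val_x(P)} (x+1)^{val_{x+1}(P)}`. -/
noncomputable def oddPart (P : Polynomial (ZMod 2)) : Polynomial (ZMod 2) :=
  P / (X ^ P.rootMultiplicity 0 * (X + 1) ^ P.rootMultiplicity 1)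

/-- The Collatz sequence of a binary polynomial `A`:
`A_0 = A`, `A_{2k+1} = oddPart A_{2k}`, `A_{2k+2} = 1 + M * A_{2k+1}`. -/
noncomputable def collatz (A : Polynomial (ZMod 2)) : ℕ → Polynomial (ZMod 2)
  | 0 => A
  | n + 1 => if n % 2 = 0 then oddPart (collatz A n) else 1 + M * collatz A n

/-- `a_k`: the multiplicity of `x` in `A_k`. -/
noncomputable def aSeq (A : Polynomial (ZMod 2)) (k : ℕ) : ℕ :=
  (collatz A k).rootMultiplicity 0

/-- `b_k`: the multiplicity of `x + 1` in `A_k`. -/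
noncomputable def bSeq (A : Polynomial (ZMod 2)) (k : ℕ) : ℕ :=
  (collatz A k).rootMultiplicity 1

/-- The length `ℓ_A = m + 1`, where `m` is the least nonnegative integer
with `A_{2m+1} = 1`. -/
noncomputable def collatzLength (A : Polynomial (ZMod 2)) : ℕ :=
  sInf {m : ℕ | collatz A (2 * m + 1) = 1} + 1


/-
Write `u = x (x + 1)`, so that `M = u + 1`. On odd terms the dynamics is `O ↦ oddPart (1 + M O)`,
and `1 + M (1 + u^(e+1) W) = u (1 + u^e M W)`: each step trades one factor `u` for a factor `M`.
If `n = 2^t (2i + 1)`, Frobenius and `M^(2i+1) + 1 = u (1 + u S)` give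
`oddPart (M^n + 1) = 1 + u^(2^t) S^(2^t)`. After `2^t` steps this becomes the odd part of
`(1 + M S)^(2^t)`, which is also the odd part of `M^(n + 2^t) + 1 = (u^2 (1 + M S))^(2^t)`; the
intermediate terms `1 + u^e M^k S^(2^t)` (`e ≥ 1`) differ from `1` because `S ≠ 0` for `i ≥ 1`.
So the exponent `n = 2^r - j` moves to `n + 2^(v₂ n)` at the cost of `2^(v₂ n)` steps, staying
at most `2^r`, until it reaches `2^r`, where `M^(2^r) + 1 = u^(2^r)` has odd part `1`.
-/

lemma add_one_pow_two_pow_mul_add_one {R : Type*} [CommSemiring R] [CharP R 2] (x : R) (t m : ℕ) :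
    x ^ (2 ^ t * m) + 1 = (x ^ m + 1) ^ 2 ^ t := by
  rw [add_pow_char_pow, one_pow, mul_comm, pow_mul]

lemma exists_add_one_pow_odd_add_one {R : Type*} [CommRing R] [CharP R 2] (u : R) (i : ℕ) :
    ∃ S : R, (u + 1) ^ (2 * i + 1) + 1 = u * (1 + u * S) := by
  induction i with
  | zero => exact ⟨0, by linear_combination CharTwo.two_eq_zero (R := R)⟩
  | succ i ih =>
    obtain ⟨S, hS⟩ := ih
    refine ⟨S + u + u ^ 2 * S + 1, ?_⟩
    linear_combination (u + 1) ^ 2 * hS + (u ^ 3 * S - u) * CharTwo.two_eq_zero (R := R)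

lemma X_add_one_eq_X_sub_C : (X + 1 : (ZMod 2)[X]) = X - C 1 := by
  rw [sub_eq_add_neg, ← C_neg, show (-1 : ZMod 2) = 1 by decide, C_1]

lemma X_add_one_ne_zero : (X + 1 : (ZMod 2)[X]) ≠ 0 :=
  X_add_one_eq_X_sub_C ▸ X_sub_C_ne_zero 1

lemma rootMultiplicity_X_pow_mul_X_add_one_pow_mul (a b : ℕ) {Q : (ZMod 2)[X]}
    (h0 : Q.eval 0 ≠ 0) (h1 : Q.eval 1 ≠ 0) :
    (X ^ a * (X + 1) ^ b * Q).rootMultiplicity 0 = a ∧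
      (X ^ a * (X + 1) ^ b * Q).rootMultiplicity 1 = b := by
  have hQ : Q ≠ 0 := by rintro rfl; simp at h0
  have hX : X ^ a * (X + 1) ^ b * Q = (X - C 0) ^ a * (X - C 1) ^ b * Q := by
    rw [C_0, sub_zero, X_add_one_eq_X_sub_C]
  have hne : (X - C 0) ^ a * (X - C 1) ^ b * Q ≠ 0 :=
    mul_ne_zero (mul_ne_zero (pow_ne_zero _ (X_sub_C_ne_zero 0))
      (pow_ne_zero _ (X_sub_C_ne_zero 1))) hQ
  rw [hX, rootMultiplicity_mul hne, rootMultiplicity_mul hne,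
    rootMultiplicity_mul (left_ne_zero_of_mul hne), rootMultiplicity_mul (left_ne_zero_of_mul hne),
    rootMultiplicity_X_sub_C_pow, rootMultiplicity_X_sub_C_pow,
    rootMultiplicity_eq_zero h0, rootMultiplicity_eq_zero h1,
    rootMultiplicity_eq_zero (p := (X - C 1) ^ b) (by simp),
    rootMultiplicity_eq_zero (p := (X - C 0) ^ a) (by simp)]
  simp

lemma oddPart_X_pow_mul_X_add_one_pow_mul (a b : ℕ) {Q : (ZMod 2)[X]}
    (h0 : Q.eval 0 ≠ 0) (h1 : Q.eval 1 ≠ 0) : oddPart (X ^ a * (X + 1) ^ b * Q) = Q := by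
  obtain ⟨ha, hb⟩ := rootMultiplicity_X_pow_mul_X_add_one_pow_mul a b h0 h1
  rw [oddPart, ha, hb, mul_div_cancel_left₀ _
    (mul_ne_zero (pow_ne_zero _ X_ne_zero) (pow_ne_zero _ X_add_one_ne_zero))]

lemma oddPart_eq_self {Q : (ZMod 2)[X]} (h0 : Q.eval 0 ≠ 0) (h1 : Q.eval 1 ≠ 0) :
    oddPart Q = Q := by
  simpa using oddPart_X_pow_mul_X_add_one_pow_mul 0 0 h0 h1

lemma exists_eq_X_pow_mul_X_add_one_pow_mul {Q : (ZMod 2)[X]} (hQ : Q ≠ 0) :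
    ∃ a b R, Q = X ^ a * (X + 1) ^ b * R ∧ R.eval 0 ≠ 0 ∧ R.eval 1 ≠ 0 := by
  obtain ⟨P, hQP, hP0⟩ := exists_eq_pow_rootMultiplicity_mul_and_not_dvd Q hQ 0
  obtain ⟨R, hPR, hR1⟩ := exists_eq_pow_rootMultiplicity_mul_and_not_dvd P
    (right_ne_zero_of_mul (hQP ▸ hQ)) 1
  refine ⟨Q.rootMultiplicity 0, P.rootMultiplicity 1, R, ?_, fun h ↦ hP0 ?_,
    fun h ↦ hR1 (dvd_iff_isRoot.2 h)⟩
  · conv_lhs => rw [hQP, hPR]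
    rw [C_0, sub_zero, X_add_one_eq_X_sub_C, mul_assoc]
  · rw [hPR]; exact dvd_mul_of_dvd_right (dvd_iff_isRoot.2 h) _

lemma oddPart_X_mul_X_add_one_pow_mul (c : ℕ) (Q : (ZMod 2)[X]) :
    oddPart ((X * (X + 1)) ^ c * Q) = oddPart Q := by
  rcases eq_or_ne Q 0 with rfl | hQ
  · rw [mul_zero]
  obtain ⟨a, b, R, rfl, h0, h1⟩ := exists_eq_X_pow_mul_X_add_one_pow_mul hQ
  rw [oddPart_X_pow_mul_X_add_one_pow_mul _ _ h0 h1,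
    show (X * (X + 1)) ^ c * (X ^ a * (X + 1) ^ b * R) = X ^ (c + a) * (X + 1) ^ (c + b) * R by
      rw [mul_pow, pow_add, pow_add]; ring,
    oddPart_X_pow_mul_X_add_one_pow_mul _ _ h0 h1]

lemma M_eq : (M : (ZMod 2)[X]) = X * (X + 1) + 1 := by
  rw [M]; ring

lemma M_add_one : (M : (ZMod 2)[X]) + 1 = X * (X + 1) := by
  rw [M_eq]; linear_combination CharTwo.two_eq_zero (R := (ZMod 2)[X])

lemma natDegree_M : (M : (ZMod 2)[X]).natDegree = 2 := by
  rw [M]; compute_degree!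

lemma M_ne_zero : (M : (ZMod 2)[X]) ≠ 0 :=
  ne_zero_of_natDegree_gt (natDegree_M ▸ two_pos)

noncomputable def oddStep (P : (ZMod 2)[X]) : (ZMod 2)[X] :=
  oddPart (1 + M * P)

lemma collatz_two_mul_add_one (A : (ZMod 2)[X]) (k : ℕ) :
    collatz A (2 * k + 1) = oddStep^[k] (oddPart A) := by
  induction k with
  | zero => simp [collatz]
  | succ k ih =>
    rw [Function.iterate_succ_apply', ← ih, oddStep,
      show 2 * (k + 1) + 1 = 2 * k + 1 + 1 + 1 by ring]
    simp [collatz, Nat.add_mod]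

lemma oddPart_one_add_X_mul_X_add_one_pow_mul (e : ℕ) (W : (ZMod 2)[X]) :
    oddPart (1 + (X * (X + 1)) ^ (e + 1) * W) = 1 + (X * (X + 1)) ^ (e + 1) * W :=
  oddPart_eq_self (by simp) (by simp [one_add_one_eq_two, CharTwo.two_eq_zero])

lemma oddStep_one_add_X_mul_X_add_one_pow_mul (e : ℕ) (W : (ZMod 2)[X]) :
    oddStep (1 + (X * (X + 1)) ^ (e + 1) * W) = oddPart (1 + (X * (X + 1)) ^ e * (M * W)) := by
  have h : 1 + M * (1 + (X * (X + 1)) ^ (e + 1) * W) =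
      (X * (X + 1)) ^ 1 * (1 + (X * (X + 1)) ^ e * (M * W)) := by
    rw [← M_add_one]; ring
  rw [oddStep, h, oddPart_X_mul_X_add_one_pow_mul]

lemma iterate_oddStep_oddPart_one_add (k e : ℕ) (W : (ZMod 2)[X]) :
    oddStep^[k] (oddPart (1 + (X * (X + 1)) ^ (e + k) * W)) =
      oddPart (1 + (X * (X + 1)) ^ e * (M ^ k * W)) := by
  induction k generalizing e W with
  | zero => simp
  | succ k ih =>
    rw [Function.iterate_succ_apply, ← add_assoc, oddPart_one_add_X_mul_X_add_one_pow_mul,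
      oddStep_one_add_X_mul_X_add_one_pow_mul, ih, pow_succ, mul_assoc]

lemma oddPart_M_pow_two_pow_mul_add_one {m : ℕ} {S : (ZMod 2)[X]}
    (hS : M ^ m + 1 = X * (X + 1) * (1 + X * (X + 1) * S)) (t : ℕ) :
    oddPart (M ^ (2 ^ t * m) + 1) = oddPart (1 + (X * (X + 1)) ^ 2 ^ t * S ^ 2 ^ t) := by
  rw [add_one_pow_two_pow_mul_add_one, hS, mul_pow, oddPart_X_mul_X_add_one_pow_mul,
    add_pow_char_pow, one_pow, mul_pow]

lemma iterate_two_pow_oddStep_oddPart_M_pow_add_one (t i : ℕ) :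
    oddStep^[2 ^ t] (oddPart (M ^ (2 ^ t * (2 * i + 1)) + 1)) =
      oddPart (M ^ (2 ^ t * (2 * i + 2)) + 1) := by
  obtain ⟨S, hS⟩ := exists_add_one_pow_odd_add_one (X * (X + 1) : (ZMod 2)[X]) i
  rw [← M_eq] at hS
  have hS_succ : M ^ (2 * i + 2) + 1 = (X * (X + 1)) ^ 2 * (1 + M * S) := by
    linear_combination M * hS + (X * (X + 1) - 1) * M_eq
  have hiter := iterate_oddStep_oddPart_one_add (2 ^ t) 0 (S ^ 2 ^ t)
  rw [zero_add, pow_zero, one_mul] at hiter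
  rw [oddPart_M_pow_two_pow_mul_add_one hS, hiter, add_one_pow_two_pow_mul_add_one, hS_succ,
    mul_pow, ← pow_mul, oddPart_X_mul_X_add_one_pow_mul, add_pow_char_pow, one_pow, mul_pow]

lemma iterate_oddStep_oddPart_M_pow_add_one_ne_one {t i k : ℕ} (hi : 1 ≤ i) (hk : k < 2 ^ t) :
    oddStep^[k] (oddPart (M ^ (2 ^ t * (2 * i + 1)) + 1)) ≠ 1 := by
  obtain ⟨S, hS⟩ := exists_add_one_pow_odd_add_one (X * (X + 1) : (ZMod 2)[X]) i
  rw [← M_eq] at hS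
  have hS0 : S ≠ 0 := by
    rintro rfl
    have h : M ^ (2 * i + 1) + 1 = M + 1 := by
      rw [hS, M_add_one]; ring
    have hdeg := congrArg natDegree (add_right_cancel h)
    rw [natDegree_pow, natDegree_M] at hdeg
    omega
  obtain ⟨e, he⟩ : ∃ e, 2 ^ t = e + 1 + k := ⟨2 ^ t - k - 1, by omega⟩
  rw [oddPart_M_pow_two_pow_mul_add_one hS, he, iterate_oddStep_oddPart_one_add,
    oddPart_one_add_X_mul_X_add_one_pow_mul, Ne, add_eq_left]
  exact mul_ne_zero (pow_ne_zero _ (mul_ne_zero X_ne_zero X_add_one_ne_zero))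
    (mul_ne_zero (pow_ne_zero _ M_ne_zero) (pow_ne_zero _ hS0))

lemma exists_two_pow_sub_eq_two_pow_mul_odd {r j : ℕ} (hj0 : 0 < j) (hj : j < 2 ^ (r - 1)) :
    ∃ t i, 1 ≤ i ∧ 2 ^ r - j = 2 ^ t * (2 * i + 1) ∧ 2 ^ t ≤ j := by
  cases r with
  | zero => simp at hj; omega
  | succ s =>
  rw [Nat.add_sub_cancel] at hj
  have h2 : 2 ^ (s + 1) = 2 * 2 ^ s := pow_succ' 2 s
  obtain ⟨t, m, hm, hn⟩ := Nat.exists_eq_pow_mul_and_not_dvd (n := 2 ^ (s + 1) - j) (by omega) 2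
    (by norm_num)
  obtain ⟨i, rfl⟩ : ∃ i, m = 2 * i + 1 := ⟨m / 2, by omega⟩
  have hts : t < s + 1 := by
    rw [← Nat.pow_lt_pow_iff_right (a := 2) (by norm_num)]
    have : 2 ^ t ≤ 2 ^ t * (2 * i + 1) := Nat.le_mul_of_pos_right _ (by omega)
    omega
  have hi : 1 ≤ i := by
    by_contra! hi0
    rw [Nat.lt_one_iff.1 hi0, mul_zero, zero_add, mul_one] at hn
    have hst : s < t := by rw [← Nat.pow_lt_pow_iff_right (a := 2) (by norm_num)]; omega
    omega
  have hdvd : 2 ^ t ∣ j := by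
    have : j = 2 ^ (s + 1) - 2 ^ t * (2 * i + 1) := by omega
    rw [this]
    exact Nat.dvd_sub (pow_dvd_pow 2 hts.le) (dvd_mul_right _ _)
  exact ⟨t, i, hi, hn, Nat.le_of_dvd hj0 hdvd⟩

theorem iterate_oddStep_oddPart_M_pow_add_one {r j : ℕ} (hj : j < 2 ^ (r - 1)) :
    oddStep^[j] (oddPart (M ^ (2 ^ r - j) + 1)) = 1 ∧
      ∀ k < j, oddStep^[k] (oddPart (M ^ (2 ^ r - j) + 1)) ≠ 1 := by
  induction j using Nat.strong_induction_on with
  | _ j ih =>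
  rcases Nat.eq_zero_or_pos j with rfl | hj0
  · refine ⟨?_, by simp⟩
    have hpow : M ^ 2 ^ r + 1 = (X * (X + 1)) ^ 2 ^ r * 1 := by
      rw [mul_one, ← M_add_one, add_pow_char_pow, one_pow]
    rw [Nat.sub_zero, Function.iterate_zero_apply, hpow, oddPart_X_mul_X_add_one_pow_mul,
      oddPart_eq_self] <;> simp
  obtain ⟨t, i, hi, hn, htj⟩ := exists_two_pow_sub_eq_two_pow_mul_odd hj0 hj
  have hjr : 2 ^ (r - 1) ≤ 2 ^ r := Nat.pow_le_pow_right two_pos (Nat.sub_le r 1)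
  have ht : 0 < 2 ^ t := Nat.two_pow_pos t
  have hn' : 2 ^ r - (j - 2 ^ t) = 2 ^ t * (2 * i + 2) := by
    have : 2 ^ t * (2 * i + 2) = 2 ^ t * (2 * i + 1) + 2 ^ t := by ring
    omega
  obtain ⟨hreach, hbefore⟩ := ih (j - 2 ^ t) (by omega) (by omega)
  rw [hn'] at hreach hbefore
  have hphase := iterate_two_pow_oddStep_oddPart_M_pow_add_one t i
  have hsplit {k : ℕ} (hk : 2 ^ t ≤ k) : oddStep^[k] = oddStep^[k - 2 ^ t] ∘ oddStep^[2 ^ t] := by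
    rw [← Function.iterate_add, Nat.sub_add_cancel hk]
  rw [hn]
  refine ⟨by rw [hsplit htj, Function.comp_apply, hphase, hreach], fun k hk ↦ ?_⟩
  rcases lt_or_ge k (2 ^ t) with hkt | hkt
  · exact iterate_oddStep_oddPart_M_pow_add_one_ne_one hi hkt
  · rw [hsplit hkt, Function.comp_apply, hphase]
    exact hbefore _ (by omega)

lemma collatzLength_eq_of_iterate_oddStep {A : (ZMod 2)[X]} {j : ℕ}
    (hj : oddStep^[j] (oddPart A) = 1) (hlt : ∀ k < j, oddStep^[k] (oddPart A) ≠ 1) :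
    collatzLength A = j + 1 := by
  simp only [collatzLength, collatz_two_mul_add_one]
  congr 1
  exact le_antisymm (Nat.sInf_le hj) (le_csInf ⟨j, hj⟩ fun k hk ↦ not_lt.1 fun h ↦ hlt k h hk)

theorem length_M_pow_add_one_general (r j : ℕ) (hj : j ≤ 2 ^ (r - 1) - 1)
    (A : Polynomial (ZMod 2)) (hA : A = M ^ (2 ^ r - j) + 1) :
    collatzLength A = j + 1 := by
  have hj' : j < 2 ^ (r - 1) := by
    have := Nat.two_pow_pos (r - 1)
    omega
  obtain ⟨hreach, hbefore⟩ := iterate_oddStep_oddPart_M_pow_add_one hj'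
  subst hA
  exact collatzLength_eq_of_iterate_oddStep hreach hbefore

theorem length_M_pow_add_one (r j : ℕ) (hr : 1 ≤ r) (hj : j ≤ 2 ^ (r - 1) - 1)
    (A : Polynomial (ZMod 2)) (hA : A = M ^ (2 ^ r - j) + 1) :
    collatzLength A = j + 1 :=
  length_M_pow_add_one_general r j hj A hA
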